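/- Let X^n be a random vector on {0,1}^n, let Y^n(t) be its output through a memoryless BEC with survival probability t, and let Z^n be obtained from Y^n(t) by further passing each coordinate through an independent erasure channel with survival probability t' = t₁/t (so Z^n is the output of a BEC with survival probability t₁ ≤ t). Then I(X^n; Z^n) ≥ t'·I(X^n; Y^n(t)). -/

import Mathlib

/-!
Let `τ` be the random set of coordinates surviving an erasure channel of survival probability `s`,
and encode the revealed part of `X` as the mask `τ ⊓ X`. The output determines `τ` and `τ ⊓ X`
and conversely, and `τ` is independent of `X`, so `I(X; Y) = E_τ H(τ ⊓ X)`. The cascade's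
surviving set is `T ⊓ S` with `T`, `S` independent of rates `t`, `t'`, so it suffices to show
`t' H(T ⊓ X) ≤ E_S H(T ⊓ S ⊓ X)` for every fixed `T`. This is Shearer's lemma for the set function
`σ ↦ H(σ ⊓ X)`, which vanishes at `⊥` and is submodular (conditional mutual information is
nonnegative, by Gibbs' inequality): adding one coordinate `k` to `T` raises the left side by
`t'` times the entropy gain, and by submodularity the right side by at least the same gain on the
event `S k`, which has probability `t'`.
-/

open Finset

/-- Shannon entropy (in bits) of a pmf on a finite type (convention `0·log 0 = 0`
holds since `Real.logb 2 0 = 0`). -/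
noncomputable def H2 {α : Type*} [Fintype α] (p : α → ℝ) : ℝ :=
  -∑ x, p x * Real.logb 2 (p x)

/-- `p` is a probability mass function. -/
def IsPMF {α : Type*} [Fintype α] (p : α → ℝ) : Prop :=
  (∀ x, 0 ≤ p x) ∧ ∑ x, p x = 1

/-- Left marginal of a joint pmf. -/
noncomputable def margL {α β : Type*} [Fintype α] [Fintype β] (p : α × β → ℝ) : α → ℝ :=
  fun a => ∑ b, p (a, b)

/-- Right marginal of a joint pmf. -/
noncomputable def margR {α β : Type*} [Fintype α] [Fintype β] (p : α × β → ℝ) : β → ℝ :=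
  fun b => ∑ a, p (a, b)

/-- Mutual information (in bits) of a joint pmf: `I = H(X) + H(Y) - H(X,Y)`. -/
noncomputable def MI {α β : Type*} [Fintype α] [Fintype β] (p : α × β → ℝ) : ℝ :=
  H2 (margL p) + H2 (margR p) - H2 p

/-- Binary erasure channel on `Bool` with survival probability `t`
(erasure probability `1 - t`); `none` is the erasure symbol. -/
noncomputable def becW (t : ℝ) (x : Bool) : Option Bool → ℝ :=
  fun y => match y with
  | none => 1 - t
  | some b => if b = x then t else 0

open Finset Real

section Pushforward

variable {α β γ : Type*} [Fintype α] [DecidableEq β]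

def pushforward (f : α → β) (q : α → ℝ) : β → ℝ :=
  fun b => ∑ a with f a = b, q a

theorem sum_pushforward_mul [Fintype β] (f : α → β) (q : α → ℝ) (F : β → ℝ) :
    ∑ b, pushforward f q b * F b = ∑ a, q a * F (f a) := by
  rw [← sum_fiberwise univ f fun a => q a * F (f a)]
  refine sum_congr rfl fun b _ => ?_
  rw [pushforward, sum_mul]
  exact sum_congr rfl fun a ha => by rw [(mem_filter.1 ha).2]

theorem pushforward_pushforward [Fintype β] [DecidableEq γ] (f : α → β) (g : β → γ)
    (q : α → ℝ) :
    pushforward g (pushforward f q) = pushforward (fun a => g (f a)) q := by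
  ext c
  simpa [pushforward, sum_filter] using sum_pushforward_mul f q fun b => if g b = c then 1 else 0

theorem pushforward_id [DecidableEq α] (q : α → ℝ) : pushforward id q = q := by
  ext a
  simp [pushforward, sum_filter]

theorem pushforward_nonneg {q : α → ℝ} (hq : ∀ a, 0 ≤ q a) (f : α → β) (b : β) :
    0 ≤ pushforward f q b :=
  sum_nonneg fun a _ => hq a

theorem le_pushforward_apply {q : α → ℝ} (hq : ∀ a, 0 ≤ q a) (f : α → β) (a : α) :
    q a ≤ pushforward f q (f a) :=
  single_le_sum (fun a _ => hq a) (mem_filter.2 ⟨mem_univ a, rfl⟩)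

theorem exists_eq_of_pushforward_ne_zero {f : α → β} {q : α → ℝ} {b : β}
    (h : pushforward f q b ≠ 0) : ∃ a, f a = b := by
  obtain ⟨a, ha, -⟩ := exists_ne_zero_of_sum_ne_zero h
  exact ⟨a, (mem_filter.1 ha).2⟩

theorem sum_pushforward [Fintype β] (f : α → β) (q : α → ℝ) :
    ∑ b, pushforward f q b = ∑ a, q a := by
  simpa using sum_pushforward_mul f q fun _ => 1

theorem pushforward_const (q : α → ℝ) (b₀ : β) :
    pushforward (fun _ => b₀) q = fun b => if b₀ = b then ∑ a, q a else 0 := by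
  ext b
  split_ifs with h <;> simp [pushforward, h]

theorem pushforward_fst_mul [DecidableEq α] [Fintype γ] (p : α → ℝ) (w : γ → ℝ)
    (hw : ∑ c, w c = 1) :
    pushforward Prod.fst (fun ac : α × γ => p ac.1 * w ac.2) = p := by
  ext a
  simp [pushforward, sum_filter, Fintype.sum_prod_type, ← mul_sum, hw]

theorem pushforward_mul_dependent [Fintype γ] [DecidableEq γ] (p : α → ℝ) (w : γ → ℝ)
    (k : γ → α → β) :
    pushforward (fun ac : α × γ => (ac.2, k ac.2 ac.1)) (fun ac => p ac.1 * w ac.2) =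
      fun cb => w cb.1 * pushforward (k cb.1) p cb.2 := by
  ext ⟨c, b⟩
  simp [pushforward, sum_filter, Fintype.sum_prod_type, Prod.ext_iff, ite_and, mul_sum, mul_comm]

theorem margL_eq_pushforward [DecidableEq α] [Fintype γ] (r : α × γ → ℝ) :
    margL r = pushforward Prod.fst r := by
  ext a
  simp [margL, pushforward, sum_filter, Fintype.sum_prod_type_right]

theorem margR_eq_pushforward [Fintype γ] [DecidableEq γ] (r : α × γ → ℝ) :
    margR r = pushforward Prod.snd r := by
  ext c
  simp [margR, pushforward, sum_filter, Fintype.sum_prod_type]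

end Pushforward

section Entropy

variable {α β γ δ : Type*} [Fintype α] [Fintype β]

theorem H2_eq_sum_negMulLog (q : α → ℝ) : H2 q = (∑ a, negMulLog (q a)) / log 2 := by
  rw [H2, sum_div, ← sum_neg_distrib]
  refine sum_congr rfl fun a _ => ?_
  rw [negMulLog, logb]
  ring

/-- Chain rule `H(A, B) = H(A) + H(B | A)`, for `A ∼ w` and `B ∼ m a` given `A = a`. -/
theorem H2_mul_kernel (w : α → ℝ) (m : α → β → ℝ) (hm : ∀ a, ∑ b, m a b = 1) :
    H2 (fun ab : α × β => w ab.1 * m ab.1 ab.2) = H2 w + ∑ a, w a * H2 (m a) := by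
  simp only [H2_eq_sum_negMulLog, Fintype.sum_prod_type, negMulLog_mul, sum_add_distrib,
    ← sum_mul, ← mul_sum, hm, one_mul]
  rw [add_div, sum_div, sum_div]
  simp only [mul_div_assoc]

variable [DecidableEq β]

theorem H2_pushforward (f : α → β) (q : α → ℝ) :
    H2 (pushforward f q) = -∑ a, q a * logb 2 (pushforward f q (f a)) := by
  rw [H2, sum_pushforward_mul f q fun b => logb 2 (pushforward f q b)]

theorem H2_pushforward_congr [Fintype γ] [DecidableEq γ] {f : α → β} {g : α → γ}
    (hfg : ∀ a a', f a = f a' ↔ g a = g a') (q : α → ℝ) :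
    H2 (pushforward f q) = H2 (pushforward g q) := by
  simp only [H2_pushforward, pushforward, hfg]

theorem H2_pushforward_of_injective [DecidableEq α] {f : α → β} (hf : Function.Injective f)
    (q : α → ℝ) : H2 (pushforward f q) = H2 q := by
  rw [H2_pushforward_congr (f := f) (g := id) (fun a a' => hf.eq_iff) q, pushforward_id]

theorem H2_pushforward_const {q : α → ℝ} (hq : ∑ a, q a = 1) (b₀ : β) :
    H2 (pushforward (fun _ => b₀) q) = 0 := by
  simp [pushforward_const, hq, H2, apply_ite]

theorem sum_mul_logb_nonpos {q r : α → ℝ} (hq : IsPMF q) (hr : ∀ a, 0 < q a → 0 < r a)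
    (h : ∑ a, q a * r a ≤ 1) : ∑ a, q a * logb 2 (r a) ≤ 0 := by
  have hlog2 : 0 < log 2 := log_pos one_lt_two
  calc ∑ a, q a * logb 2 (r a) ≤ ∑ a, (q a * r a - q a) / log 2 := by
        refine sum_le_sum fun a _ => ?_
        rcases (hq.1 a).eq_or_lt with ha | ha
        · simp [← ha]
        · rw [logb, ← mul_div_assoc]
          have := mul_le_mul_of_nonneg_left (log_le_sub_one_of_pos (hr a ha)) ha.le
          gcongr
          linarith
    _ = (∑ a, q a * r a - 1) / log 2 := by rw [← sum_div, sum_sub_distrib, hq.2]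
    _ ≤ 0 := div_nonpos_of_nonpos_of_nonneg (by linarith) hlog2.le

variable [Fintype γ] [DecidableEq γ] [DecidableEq δ]

theorem sum_mul_pair_ratio_le_one {q : α → ℝ} (hq : IsPMF q) {f : α → β} {g : α → γ}
    {φ : β → δ} {ψ : γ → δ} (hfg : ∀ a, φ (f a) = ψ (g a)) :
    ∑ a, q a * (pushforward f q (f a) * pushforward g q (g a) /
      (pushforward (fun a => (f a, g a)) q (f a, g a) *
        pushforward (fun a => φ (f a)) q (φ (f a)))) ≤ 1 := by
  set PX := pushforward f q
  set PY := pushforward g q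
  set PXY := pushforward (fun a => (f a, g a)) q
  set PZ := pushforward (fun a => φ (f a)) q
  have hPZ : ∀ z, ∑ c, (if ψ c = z then PY c else 0) = PZ z := by
    intro z
    rw [← sum_filter, ← pushforward, pushforward_pushforward]
    simp_rw [← hfg]
    rfl
  calc _ = ∑ bc : β × γ, PXY bc * (PX bc.1 * PY bc.2 / (PXY bc * PZ (φ bc.1))) :=
        (sum_pushforward_mul _ q fun bc => PX bc.1 * PY bc.2 / (PXY bc * PZ (φ bc.1))).symm
    _ ≤ ∑ bc : β × γ, if ψ bc.2 = φ bc.1 then PX bc.1 * PY bc.2 / PZ (φ bc.1) else 0 := by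
        refine sum_le_sum fun bc _ => ?_
        by_cases h0 : PXY bc = 0
        · rw [h0, zero_mul]
          split_ifs
          · exact div_nonneg (mul_nonneg (pushforward_nonneg hq.1 f _)
              (pushforward_nonneg hq.1 g _)) (pushforward_nonneg hq.1 _ _)
          · exact le_rfl
        · obtain ⟨a, rfl⟩ := exists_eq_of_pushforward_ne_zero h0
          rw [if_pos (hfg a).symm, ← mul_div_assoc, mul_div_mul_left _ _ h0]
    _ = ∑ b, PX b / PZ (φ b) * ∑ c, (if ψ c = φ b then PY c else 0) := by
        rw [Fintype.sum_prod_type]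
        refine sum_congr rfl fun b _ => ?_
        rw [mul_sum]
        refine sum_congr rfl fun c _ => ?_
        split_ifs <;> ring
    _ ≤ ∑ b, PX b := by
        refine sum_le_sum fun b _ => ?_
        rw [hPZ]
        by_cases h0 : PZ (φ b) = 0
        · rw [h0, mul_zero]
          exact pushforward_nonneg hq.1 f b
        · rw [div_mul_cancel₀ _ h0]
    _ = 1 := by rw [sum_pushforward, hq.2]

/-- Submodularity of entropy: `H(X, Y) + H(Z) ≤ H(X) + H(Y)` when `Z` is a function both of `X`
and of `Y`. -/
theorem H2_pushforward_pair_add_le [Fintype δ] {q : α → ℝ} (hq : IsPMF q) {f : α → β}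
    {g : α → γ} {φ : β → δ} {ψ : γ → δ} (hfg : ∀ a, φ (f a) = ψ (g a)) :
    H2 (pushforward (fun a => (f a, g a)) q) + H2 (pushforward (fun a => φ (f a)) q) ≤
      H2 (pushforward f q) + H2 (pushforward g q) := by
  simp only [H2_pushforward]
  set PX := pushforward f q
  set PY := pushforward g q
  set PXY := pushforward (fun a => (f a, g a)) q
  set PZ := pushforward (fun a => φ (f a)) q
  have hpos : ∀ a, 0 < q a →
      0 < PX (f a) ∧ 0 < PY (g a) ∧ 0 < PXY (f a, g a) ∧ 0 < PZ (φ (f a)) := fun a ha =>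
    ⟨ha.trans_le (le_pushforward_apply hq.1 _ a), ha.trans_le (le_pushforward_apply hq.1 _ a),
      ha.trans_le (le_pushforward_apply hq.1 _ a), ha.trans_le (le_pushforward_apply hq.1 _ a)⟩
  have hr : ∀ a, 0 < q a → 0 < PX (f a) * PY (g a) / (PXY (f a, g a) * PZ (φ (f a))) :=
    fun a ha => by
      obtain ⟨hX, hY, hXY, hZ⟩ := hpos a ha
      exact div_pos (mul_pos hX hY) (mul_pos hXY hZ)
  have gibbs := sum_mul_logb_nonpos hq hr (sum_mul_pair_ratio_le_one hq hfg)
  have hsplit : ∀ a, q a * logb 2 (PX (f a) * PY (g a) / (PXY (f a, g a) * PZ (φ (f a)))) =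
      q a * logb 2 (PX (f a)) + q a * logb 2 (PY (g a)) - q a * logb 2 (PXY (f a, g a)) -
        q a * logb 2 (PZ (φ (f a))) := by
    intro a
    rcases (hq.1 a).eq_or_lt with ha | ha
    · simp [← ha]
    · obtain ⟨hX, hY, hXY, hZ⟩ := hpos a ha
      rw [logb_div (mul_pos hX hY).ne' (mul_pos hXY hZ).ne', logb_mul hX.ne' hY.ne',
        logb_mul hXY.ne' hZ.ne']
      ring
  simp only [hsplit, sum_sub_distrib, sum_add_distrib] at gibbs
  linarith

end Entropy

theorem sub_le_sub_inf_of_submodular {L : Type*} [DistribLattice L] {f : L → ℝ}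
    (hsub : ∀ A B, f (A ⊔ B) + f (A ⊓ B) ≤ f A + f B) {a b c : L} (hab : a ≤ b)
    (hbc : b ≤ a ⊔ c) : f b - f a ≤ f (b ⊓ c) - f (a ⊓ c) := by
  have h := hsub (b ⊓ c) a
  rw [sup_inf_right, sup_eq_left.2 hab, inf_eq_left.2 (sup_comm a c ▸ hbc), inf_right_comm,
    inf_eq_right.2 hab] at h
  linarith

section Bernoulli

variable {ι : Type*} [Fintype ι]

def iidBernoulli (s : ℝ) (τ : ι → Bool) : ℝ :=
  ∏ i, if τ i then s else 1 - s

theorem iidBernoulli_nonneg {s : ℝ} (hs0 : 0 ≤ s) (hs1 : s ≤ 1) (τ : ι → Bool) :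
    0 ≤ iidBernoulli s τ :=
  prod_nonneg fun i _ => by split_ifs <;> linarith

variable [DecidableEq ι]

theorem sum_iidBernoulli_mul_prod (s : ℝ) (g : ι → Bool → ℝ) :
    ∑ τ, iidBernoulli s τ * ∏ i, g i (τ i) = ∏ i, (s * g i true + (1 - s) * g i false) := by
  simp only [iidBernoulli, ← prod_mul_distrib]
  rw [← Fintype.prod_sum fun i b => (if b then s else 1 - s) * g i b]
  simp

theorem sum_iidBernoulli (s : ℝ) : ∑ τ : ι → Bool, iidBernoulli s τ = 1 := by
  simpa using sum_iidBernoulli_mul_prod s fun _ _ => 1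

theorem sum_iidBernoulli_mul_ite (s d : ℝ) (k : ι) :
    ∑ τ, iidBernoulli s τ * (if τ k then d else 0) = s * d := by
  have h := sum_iidBernoulli_mul_prod s fun i b => if i = k then (if b then d else 0) else 1
  rw [prod_eq_single k (fun i _ hi => by simp [hi]) (by simp)] at h
  simpa [prod_ite_eq'] using h

theorem iidBernoulli_mul_eq_pushforward (t t' : ℝ) :
    iidBernoulli (ι := ι) (t * t') =
      pushforward (fun TS : (ι → Bool) × (ι → Bool) => TS.1 ⊓ TS.2)
        (fun TS => iidBernoulli t TS.1 * iidBernoulli t' TS.2) := by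
  ext U
  have hind : ∀ T S : ι → Bool,
      (if T ⊓ S = U then iidBernoulli t T * iidBernoulli t' S else 0) =
        iidBernoulli t T * (iidBernoulli t' S * ∏ i, if (T i && S i) = U i then 1 else 0) := by
    intro T S
    rw [prod_boole]
    split_ifs with h h' h' <;> simp_all [funext_iff]
  have inner : ∀ T : ι → Bool,
      ∑ S, iidBernoulli t' S * ∏ i, (if (T i && S i) = U i then (1 : ℝ) else 0) =
        ∏ i, (t' * (if (T i && true) = U i then 1 else 0) +
          (1 - t') * (if (T i && false) = U i then 1 else 0)) :=
    fun T => sum_iidBernoulli_mul_prod t' fun i b => if (T i && b) = U i then 1 else 0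
  simp only [pushforward, sum_filter, Fintype.sum_prod_type, hind, ← mul_sum, inner]
  rw [sum_iidBernoulli_mul_prod t fun i a => t' * (if (a && true) = U i then 1 else 0) +
    (1 - t') * (if (a && false) = U i then 1 else 0), iidBernoulli]
  refine prod_congr rfl fun i _ => ?_
  cases U i
  · simp
    ring
  · simp

theorem sum_iidBernoulli_mul_eq_sum_inf (t t' : ℝ) (F : (ι → Bool) → ℝ) :
    ∑ U, iidBernoulli (t * t') U * F U =
      ∑ T, ∑ S, iidBernoulli t T * iidBernoulli t' S * F (T ⊓ S) := by
  rw [iidBernoulli_mul_eq_pushforward, sum_pushforward_mul, Fintype.sum_prod_type]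

theorem mul_le_sum_iidBernoulli_mul_inf {f : (ι → Bool) → ℝ} (hbot : f ⊥ = 0)
    (hsub : ∀ A B, f (A ⊔ B) + f (A ⊓ B) ≤ f A + f B) {s : ℝ} (hs0 : 0 ≤ s) (hs1 : s ≤ 1)
    (T : ι → Bool) : s * f T ≤ ∑ S, iidBernoulli s S * f (T ⊓ S) := by
  obtain ⟨A, rfl⟩ : ∃ A : Finset ι, (fun i => decide (i ∈ A)) = T :=
    ⟨univ.filter (T ·), by ext; simp⟩
  induction A using Finset.induction_on with
  | empty =>
    have hempty : (fun i => decide (i ∈ (∅ : Finset ι))) = ⊥ := by ext; simp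
    rw [hempty]
    simp [hbot]
  | insert k A hk ih =>
    set T := fun i => decide (i ∈ A)
    set T' := fun i => decide (i ∈ insert k A)
    have step : ∀ S : ι → Bool, (if S k then f T' - f T else 0) ≤ f (T' ⊓ S) - f (T ⊓ S) := by
      intro S
      cases hS : S k
      · have : T' ⊓ S = T ⊓ S := by
          ext i
          by_cases hi : i = k <;> simp [T, T', hi, hS]
        simp [this]
      · refine sub_le_sub_inf_of_submodular hsub (fun i => ?_) (fun i => ?_)
        · by_cases hi : i = k <;> simp [T, T', hi]
        · by_cases hi : i = k
          · simp [T, T', hi, hS]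
          · simp only [T, T', mem_insert, hi, false_or]
            exact le_sup_left
    calc s * f T' = s * f T + s * (f T' - f T) := by ring
      _ ≤ ∑ S, iidBernoulli s S * f (T ⊓ S) +
            ∑ S, iidBernoulli s S * (if S k then f T' - f T else 0) := by
        rw [sum_iidBernoulli_mul_ite]
        linarith
      _ ≤ ∑ S, iidBernoulli s S * f (T ⊓ S) +
            ∑ S, iidBernoulli s S * (f (T' ⊓ S) - f (T ⊓ S)) := by
        gcongr with S
        · exact iidBernoulli_nonneg hs0 hs1 S
        · exact step S
      _ = ∑ S, iidBernoulli s S * f (T' ⊓ S) := by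
        rw [← sum_add_distrib]
        exact sum_congr rfl fun S _ => by ring

end Bernoulli

section ErasureChannel

variable {ι : Type*}

def erasureOutput (τ x : ι → Bool) : ι → Option Bool :=
  fun i => if τ i then some (x i) else none

theorem erasureOutput_eq_iff {τ τ' x x' : ι → Bool} :
    erasureOutput τ x = erasureOutput τ' x' ↔ τ = τ' ∧ τ ⊓ x = τ' ⊓ x' := by
  simp only [funext_iff, erasureOutput, Pi.inf_apply, ← forall_and]
  refine forall_congr' fun i => ?_
  cases τ i <;> cases τ' i <;> simp

variable [Fintype ι] [DecidableEq ι]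

theorem becW_eq_add (s : ℝ) (c : Bool) (o : Option Bool) :
    becW s c o = s * (if some c = o then 1 else 0) + (1 - s) * (if none = o then 1 else 0) := by
  cases o <;> simp [becW, eq_comm]

theorem prod_becW_eq_sum (s : ℝ) (x : ι → Bool) (y : ι → Option Bool) :
    ∏ i, becW s (x i) (y i) = ∑ τ, if erasureOutput τ x = y then iidBernoulli s τ else 0 := by
  have hind : ∀ τ, (if erasureOutput τ x = y then iidBernoulli s τ else 0) =
      iidBernoulli s τ * ∏ i, if (if τ i then some (x i) else none) = y i then 1 else 0 := by
    intro τ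
    rw [prod_boole]
    simp [erasureOutput, funext_iff]
  rw [sum_congr rfl fun τ _ => hind τ,
    sum_iidBernoulli_mul_prod s fun i b =>
      if (if b then some (x i) else none) = y i then 1 else 0]
  simp [becW_eq_add]

theorem mul_prod_becW_eq_pushforward (s : ℝ) (p : (ι → Bool) → ℝ) :
    (fun xy : (ι → Bool) × (ι → Option Bool) => p xy.1 * ∏ i, becW s (xy.1 i) (xy.2 i)) =
      pushforward (fun xτ : (ι → Bool) × (ι → Bool) => (xτ.1, erasureOutput xτ.2 xτ.1))
        (fun xτ => p xτ.1 * iidBernoulli s xτ.2) := by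
  ext ⟨x, y⟩
  simp [pushforward, sum_filter, Fintype.sum_prod_type, Prod.ext_iff, ite_and, prod_becW_eq_sum,
    mul_sum]

theorem MI_mul_prod_becW (s : ℝ) {p : (ι → Bool) → ℝ} (hp : ∑ x, p x = 1) :
    MI (fun xy : (ι → Bool) × (ι → Option Bool) => p xy.1 * ∏ i, becW s (xy.1 i) (xy.2 i)) =
      ∑ τ, iidBernoulli s τ * H2 (pushforward (τ ⊓ ·) p) := by
  have hinj : Function.Injective
      fun xτ : (ι → Bool) × (ι → Bool) => (xτ.1, erasureOutput xτ.2 xτ.1) := by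
    rintro ⟨x, τ⟩ ⟨x', τ'⟩ h
    simp_all [erasureOutput_eq_iff]
  have hY : ∀ a a' : (ι → Bool) × (ι → Bool),
      erasureOutput a.2 a.1 = erasureOutput a'.2 a'.1 ↔ (a.2, a.2 ⊓ a.1) = (a'.2, a'.2 ⊓ a'.1) := by
    simp [erasureOutput_eq_iff]
  have hXY : H2 (fun xτ : (ι → Bool) × (ι → Bool) => p xτ.1 * iidBernoulli s xτ.2) =
      H2 p + H2 (iidBernoulli (ι := ι) s) := by
    simpa [hp, ← sum_mul] using
      H2_mul_kernel p (fun _ => iidBernoulli s) fun _ => sum_iidBernoulli (ι := ι) s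
  have hm : ∀ τ : ι → Bool, ∑ z, pushforward (τ ⊓ ·) p z = 1 := fun τ => by
    rw [sum_pushforward, hp]
  rw [mul_prod_becW_eq_pushforward, MI, margL_eq_pushforward, margR_eq_pushforward]
  simp only [pushforward_pushforward]
  rw [H2_pushforward_of_injective hinj, H2_pushforward_congr hY,
    pushforward_fst_mul _ _ (sum_iidBernoulli (ι := ι) s), pushforward_mul_dependent,
    H2_mul_kernel _ _ hm, hXY]
  ring

end ErasureChannel

section MarginalEntropy

variable {ι : Type*} [Fintype ι] [DecidableEq ι]

theorem H2_pushforward_bot_inf {p : (ι → Bool) → ℝ} (hp : ∑ x, p x = 1) :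
    H2 (pushforward ((⊥ : ι → Bool) ⊓ ·) p) = 0 := by
  simpa using H2_pushforward_const hp (⊥ : ι → Bool)

theorem H2_pushforward_sup_inf_add_le {p : (ι → Bool) → ℝ} (hp : IsPMF p) (A B : ι → Bool) :
    H2 (pushforward ((A ⊔ B) ⊓ ·) p) + H2 (pushforward ((A ⊓ B) ⊓ ·) p) ≤
      H2 (pushforward (A ⊓ ·) p) + H2 (pushforward (B ⊓ ·) p) := by
  have hsup :
      H2 (pushforward ((A ⊔ B) ⊓ ·) p) = H2 (pushforward (fun x => (A ⊓ x, B ⊓ x)) p) := by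
    refine H2_pushforward_congr (fun x x' => ?_) p
    simp only [funext_iff, Pi.inf_apply, Pi.sup_apply, Prod.mk.injEq, ← forall_and]
    refine forall_congr' fun i => ?_
    cases A i <;> cases B i <;> simp
  have hinf : pushforward ((A ⊓ B) ⊓ ·) p = pushforward (fun x => (A ⊓ B) ⊓ (A ⊓ x)) p := by
    congr 1
    ext x i
    simp only [Pi.inf_apply]
    cases A i <;> cases B i <;> rfl
  rw [hsup, hinf]
  refine H2_pushforward_pair_add_le hp (φ := ((A ⊓ B) ⊓ ·)) (ψ := ((A ⊓ B) ⊓ ·)) fun x => ?_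
  ext i
  simp only [Pi.inf_apply]
  cases A i <;> cases B i <;> rfl

end MarginalEntropy

/-- Degrading a BEC of survival probability `t` by a further erasure stage of survival
probability `t'` (yielding a BEC of survival probability `t·t'`) loses at most a factor
`t'` of mutual information: `I(Xⁿ;Zⁿ) ≥ t'·I(Xⁿ;Yⁿ(t))`. -/
theorem bec_cascade_mi_lower_bound (n : ℕ) (p : (Fin n → Bool) → ℝ) (hp : IsPMF p)
    (t t' : ℝ) (ht0 : 0 < t) (ht1 : t ≤ 1) (ht'0 : 0 ≤ t') (ht'1 : t' ≤ 1) :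
    t' * MI (fun xy : (Fin n → Bool) × (Fin n → Option Bool) =>
        p xy.1 * ∏ i, becW t (xy.1 i) (xy.2 i)) ≤
    MI (fun xy : (Fin n → Bool) × (Fin n → Option Bool) =>
        p xy.1 * ∏ i, becW (t * t') (xy.1 i) (xy.2 i)) := by
  set h : (Fin n → Bool) → ℝ := fun σ => H2 (pushforward (σ ⊓ ·) p)
  rw [MI_mul_prod_becW t hp.2, MI_mul_prod_becW (t * t') hp.2,
    sum_iidBernoulli_mul_eq_sum_inf, mul_sum]
  refine sum_le_sum fun T _ => ?_
  have shearer : t' * h T ≤ ∑ S, iidBernoulli t' S * h (T ⊓ S) :=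
    mul_le_sum_iidBernoulli_mul_inf (H2_pushforward_bot_inf hp.2)
      (H2_pushforward_sup_inf_add_le hp) ht'0 ht'1 T
  calc t' * (iidBernoulli t T * h T) = iidBernoulli t T * (t' * h T) := by ring
    _ ≤ iidBernoulli t T * ∑ S, iidBernoulli t' S * h (T ⊓ S) :=
      mul_le_mul_of_nonneg_left shearer (iidBernoulli_nonneg ht0.le ht1 T)
    _ = ∑ S, iidBernoulli t T * iidBernoulli t' S * h (T ⊓ S) := by
      simp only [mul_sum, mul_assoc]
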